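/- Let q be any complex number, let R̂_{S14} be the 4×4 matrix with rows (0,0,0,q), (0,1,0,0), (0,0,1,0), (q,0,0,0), and let M be the 4×4 matrix with rows (1,0,0,1), (0,1,−1,0), (0,1,1,0), (−1,0,0,1) (the S03 braid matrix). Then M is invertible and M·R̂_{S14}·M⁻¹ = diag(q, 1, 1, −q). -/

import Mathlib

/-- The braid matrix of the exotic case `S03` (used here as diagonalizer). -/
noncomputable def MS03 : Matrix (Fin 4) (Fin 4) ℂ :=
  !![1, 0, 0, 1; 0, 1, -1, 0; 0, 1, 1, 0; -1, 0, 0, 1]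

/-- The braid matrix of the exotic case `S14`. -/
noncomputable def RS14 (q : ℂ) : Matrix (Fin 4) (Fin 4) ℂ :=
  !![0, 0, 0, q; 0, 1, 0, 0; 0, 0, 1, 0; q, 0, 0, 0]

/-!
The rows of `M` are pairwise orthogonal of squared length `2`, so `M Mᵀ = 2` and `M` is
invertible. They are left eigenvectors of `R̂_{S14}`: `(1,0,0,±1)` for `±q` and `(0,1,∓1,0)` for
`1`, i.e. `M R̂ = D M`; multiplying on the right by `M⁻¹` gives the claim.
-/

open Matrix

theorem Matrix.isUnit_of_mul_transpose_eq_smul_one {n K : Type*} [Fintype n] [DecidableEq n]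
    [Field K] {A : Matrix n n K} {c : K} (hc : c ≠ 0) (hA : A * Aᵀ = c • 1) : IsUnit A := by
  refine (isUnit_iff_isUnit_det A).mpr (isUnit_det_of_right_inverse (B := c⁻¹ • Aᵀ) ?_)
  rw [Matrix.mul_smul, hA, smul_smul, inv_mul_cancel₀ hc, one_smul]

theorem MS03_mul_transpose : MS03 * MS03ᵀ = (2 : ℂ) • 1 := by
  ext i j
  fin_cases i <;> fin_cases j <;> simp [MS03, mul_apply, Fin.sum_univ_four] <;> norm_num

theorem MS03_mul_RS14 (q : ℂ) : MS03 * RS14 q = diagonal ![q, 1, 1, -q] * MS03 := by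
  ext i j
  fin_cases i <;> fin_cases j <;> simp [MS03, RS14, mul_apply, Fin.sum_univ_four]

/-- the `S03` braid matrix diagonalizes the `S14` braid matrix:
`M R̂_{S14} M⁻¹ = diag(q, 1, 1, -q)`. -/
theorem s14_diagonalized_by_s03 (q : ℂ) :
    IsUnit MS03 ∧
    MS03 * RS14 q * MS03⁻¹ = Matrix.diagonal ![q, 1, 1, -q] := by
  have hM : IsUnit MS03 := isUnit_of_mul_transpose_eq_smul_one two_ne_zero MS03_mul_transpose
  refine ⟨hM, ?_⟩
  rw [MS03_mul_RS14, mul_nonsing_inv_cancel_right _ _ ((isUnit_iff_isUnit_det _).mp hM)]
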